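/- arXiv:2312.03991 — 2 statements merged into one kernel-verified Lean document; each statement's English description precedes it below -/
import Mathlib

section
/- Let S, A be finite nonempty sets, let M be a nonempty set of transition kernels (each K ∈ M assigns to every (s,a) a probability mass function K(s,a) on S), r : S × A → ℝ bounded, γ ∈ [0,1). Define the robust Bellman operator (TQ)(s,a) = r(s,a) + γ · inf_{K ∈ M} Σ_{s'} K(s,a)(s') · max_{a'} Q(s',a'). Then T is a γ-contraction in the sup norm: ‖TQ₁ − TQ₂‖_∞ ≤ γ‖Q₁ − Q₂‖_∞ for all bounded Q₁, Q₂ : S × A → ℝ. -/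
/-- If two functions differ pointwise by at most `C`, their (conditional) infima
differ by at most `C`. -/
lemma abs_ciInf_sub_ciInf {ι : Type*} [Nonempty ι] (f g : ι → ℝ) (C : ℝ)
    (hf : BddBelow (Set.range f)) (hg : BddBelow (Set.range g))
    (h : ∀ x, |f x - g x| ≤ C) : |(⨅ x, f x) - ⨅ x, g x| ≤ C := by
  rw [abs_sub_le_iff]
  constructor
  · have h1 : ∀ x, (⨅ x, f x) - C ≤ g x := fun x => by
      have := ciInf_le hf x
      have := (abs_le.mp (h x)).2
      linarith
    linarith [le_ciInf h1]
  · have h1 : ∀ x, (⨅ x, g x) - C ≤ f x := fun x => by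
      have := ciInf_le hg x
      have := (abs_le.mp (h x)).1
      linarith
    linarith [le_ciInf h1]

/-- The robust Bellman operator (infimum over an uncertainty set of transition
kernels) is a γ-contraction in the sup norm. -/
theorem stmt_1 {S A : Type*} [Fintype S] [Fintype A] [Nonempty S] [Nonempty A]
    (M : Set (S × A → S → ℝ)) (hM : M.Nonempty)
    (hK0 : ∀ K ∈ M, ∀ p s', 0 ≤ K p s') (hK1 : ∀ K ∈ M, ∀ p, ∑ s', K p s' = 1)
    (r : S × A → ℝ) (γ : ℝ) (hγ0 : 0 ≤ γ) (hγ1 : γ < 1)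
    (TQ : (S × A → ℝ) → S × A → ℝ)
    (hTQ : ∀ Q p, TQ Q p = r p + γ * ⨅ K ∈ M, ∑ s', K p s' * ⨆ a', Q (s', a'))
    (Q₁ Q₂ : S × A → ℝ) :
    (⨆ p, |TQ Q₁ p - TQ Q₂ p|) ≤ γ * ⨆ p, |Q₁ p - Q₂ p| := by
  set C := ⨆ p, |Q₁ p - Q₂ p| with hCdef
  have hbC : ∀ p, |Q₁ p - Q₂ p| ≤ C :=
    fun p => le_ciSup (f := fun p => |Q₁ p - Q₂ p|) (Set.Finite.bddAbove (Set.finite_range _)) p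
  have hC0 : 0 ≤ C := le_trans (abs_nonneg _) (hbC (Classical.arbitrary _))
  set m₁ : S → ℝ := fun s' => ⨆ a', Q₁ (s', a') with hm₁def
  set m₂ : S → ℝ := fun s' => ⨆ a', Q₂ (s', a') with hm₂def
  have hm : ∀ s', |m₁ s' - m₂ s'| ≤ C := by
    intro s'
    rw [abs_sub_le_iff]
    constructor
    · rw [sub_le_iff_le_add, add_comm]
      apply ciSup_le
      intro a'
      have h2 : Q₂ (s', a') ≤ m₂ s' :=
        le_ciSup (f := fun a' => Q₂ (s', a')) (Set.Finite.bddAbove (Set.finite_range _)) a'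
      have h3 := (abs_le.mp (hbC (s', a'))).2
      linarith
    · rw [sub_le_iff_le_add, add_comm]
      apply ciSup_le
      intro a'
      have h2 : Q₁ (s', a') ≤ m₁ s' :=
        le_ciSup (f := fun a' => Q₁ (s', a')) (Set.Finite.bddAbove (Set.finite_range _)) a'
      have h3 := (abs_le.mp (hbC (s', a'))).1
      linarith
  -- uniform bound on m₁, m₂
  obtain ⟨B, hB⟩ : ∃ B : ℝ, 0 ≤ B ∧ ∀ s', |m₁ s'| ≤ B ∧ |m₂ s'| ≤ B := by
    refine ⟨(Finset.univ.sup' Finset.univ_nonempty fun s' => |m₁ s'| ⊔ |m₂ s'|) ⊔ 0,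
      le_max_right _ _, fun s' => ⟨?_, ?_⟩⟩
    · exact le_trans (le_trans (le_max_left _ _)
        (Finset.le_sup' (f := fun s' => |m₁ s'| ⊔ |m₂ s'|) (Finset.mem_univ s')))
        (le_max_left _ _)
    · exact le_trans (le_trans (le_max_right _ _)
        (Finset.le_sup' (f := fun s' => |m₁ s'| ⊔ |m₂ s'|) (Finset.mem_univ s')))
        (le_max_left _ _)
  apply ciSup_le
  intro p
  rw [hTQ, hTQ]
  have hsum_lb : ∀ (m : S → ℝ), (∀ s', |m s'| ≤ B) → ∀ K ∈ M,
      -B ≤ ∑ s', K p s' * m s' := by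
    intro m hmB K hK
    have : ∑ s', K p s' * (-B) ≤ ∑ s', K p s' * m s' := by
      apply Finset.sum_le_sum
      intro s' _
      exact mul_le_mul_of_nonneg_left ((abs_le.mp (hmB s')).1) (hK0 K hK p s')
    calc -B = (∑ s', K p s') * (-B) := by rw [hK1 K hK p]; ring
    _ = ∑ s', K p s' * (-B) := by rw [Finset.sum_mul]
    _ ≤ _ := this
  set g₁ : (S × A → S → ℝ) → ℝ := fun K => ⨅ _ : K ∈ M, ∑ s', K p s' * m₁ s' with hg₁def
  set g₂ : (S × A → S → ℝ) → ℝ := fun K => ⨅ _ : K ∈ M, ∑ s', K p s' * m₂ s' with hg₂def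
  have hgval : ∀ (m : S → ℝ) K (hK : K ∈ M),
      (⨅ _ : K ∈ M, ∑ s', K p s' * m s') = ∑ s', K p s' * m s' := by
    intro m K hK
    exact ciInf_pos hK
  have hgval' : ∀ (m : S → ℝ) K, K ∉ M →
      (⨅ _ : K ∈ M, ∑ s', K p s' * m s') = 0 := by
    intro m K hK
    haveI : IsEmpty (K ∈ M) := ⟨hK⟩
    rw [iInf_of_isEmpty]; exact Real.sInf_empty
  have hg_lb : ∀ (m : S → ℝ), (∀ s', |m s'| ≤ B) → ∀ K,
      -B ≤ ⨅ _ : K ∈ M, ∑ s', K p s' * m s' := by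
    intro m hmB K
    by_cases hK : K ∈ M
    · rw [hgval m K hK]; exact hsum_lb m hmB K hK
    · rw [hgval' m K hK]; linarith [hB.1]
  have hbdd₁ : BddBelow (Set.range g₁) := by
    refine ⟨-B, ?_⟩
    rintro _ ⟨K, rfl⟩
    exact hg_lb m₁ (fun s' => (hB.2 s').1) K
  have hbdd₂ : BddBelow (Set.range g₂) := by
    refine ⟨-B, ?_⟩
    rintro _ ⟨K, rfl⟩
    exact hg_lb m₂ (fun s' => (hB.2 s').2) K
  have hdiff : ∀ K, |g₁ K - g₂ K| ≤ C := by
    intro K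
    by_cases hK : K ∈ M
    · simp only [hg₁def, hg₂def]
      rw [hgval m₁ K hK, hgval m₂ K hK, ← Finset.sum_sub_distrib]
      calc |∑ s', (K p s' * m₁ s' - K p s' * m₂ s')|
          ≤ ∑ s', |K p s' * m₁ s' - K p s' * m₂ s'| := Finset.abs_sum_le_sum_abs _ _
        _ = ∑ s', K p s' * |m₁ s' - m₂ s'| := by
            apply Finset.sum_congr rfl
            intro s' _
            rw [← mul_sub, abs_mul, abs_of_nonneg (hK0 K hK p s')]
        _ ≤ ∑ s', K p s' * C := by
            apply Finset.sum_le_sum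
            intro s' _
            exact mul_le_mul_of_nonneg_left (hm s') (hK0 K hK p s')
        _ = C := by rw [← Finset.sum_mul, hK1 K hK p, one_mul]
    · simp only [hg₁def, hg₂def]
      rw [hgval' m₁ K hK, hgval' m₂ K hK]
      simpa using hC0
  have key : |(⨅ K, g₁ K) - ⨅ K, g₂ K| ≤ C :=
    abs_ciInf_sub_ciInf g₁ g₂ C hbdd₁ hbdd₂ hdiff
  have : r p + γ * (⨅ K, g₁ K) - (r p + γ * ⨅ K, g₂ K)
      = γ * ((⨅ K, g₁ K) - ⨅ K, g₂ K) := by ring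
  rw [this, abs_mul, abs_of_nonneg hγ0]
  exact mul_le_mul_of_nonneg_left key hγ0
end

section
/- Consider a finite MDP with two transition kernels T* and T̂ on finite state space S and action space A, reward r with |r| ≤ R_max, discount γ ∈ [0,1), fixed initial state s₀ and stationary policy π. Let J(T,π) = E_{π,T}[Σ_{t≥0} γ^t r(s_t,a_t) | s₀]. Then |J(T*,π) − J(T̂,π)| ≤ (2 R_max / (1−γ)) · Σ_{t≥0} γ^{t+1} E_{π,T̂}[ TV( T*(·|s_t,a_t), T̂(·|s_t,a_t) ) ], where the expectation is over trajectories generated by π and T̂, and TV is total variation distance. -/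
/-- Simulation lemma: the value gap between the true and estimated MDP is
bounded by the discounted expected per-step total-variation distance of the
transition kernels along trajectories of the estimated MDP. -/
theorem stmt_11 {S A : Type*} [Fintype S] [Fintype A] [DecidableEq S] [Nonempty S] [Nonempty A]
    (Tstar That : S × A → S → ℝ)
    (hTs0 : ∀ p s', 0 ≤ Tstar p s') (hTs1 : ∀ p, ∑ s', Tstar p s' = 1)
    (hTh0 : ∀ p s', 0 ≤ That p s') (hTh1 : ∀ p, ∑ s', That p s' = 1)
    (r : S × A → ℝ) (Rmax : ℝ) (hr : ∀ p, |r p| ≤ Rmax)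
    (γ : ℝ) (hγ0 : 0 ≤ γ) (hγ1 : γ < 1)
    (s₀ : S) (π : S → A → ℝ) (hπ0 : ∀ s a, 0 ≤ π s a) (hπ1 : ∀ s, ∑ a, π s a = 1)
    -- time-t state-action distributions under π and the respective kernels
    (dstar dhat : ℕ → S × A → ℝ)
    (hds0 : ∀ s a, dstar 0 (s, a) = if s = s₀ then π s a else 0)
    (hdh0 : ∀ s a, dhat 0 (s, a) = if s = s₀ then π s a else 0)
    (hdss : ∀ t s' a', dstar (t + 1) (s', a') =
      π s' a' * ∑ p : S × A, dstar t p * Tstar p s')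
    (hdhs : ∀ t s' a', dhat (t + 1) (s', a') =
      π s' a' * ∑ p : S × A, dhat t p * That p s')
    (Jstar Jhat : ℝ)
    (hJs : Jstar = ∑' t : ℕ, γ ^ t * ∑ p : S × A, dstar t p * r p)
    (hJh : Jhat = ∑' t : ℕ, γ ^ t * ∑ p : S × A, dhat t p * r p) :
    |Jstar - Jhat| ≤ 2 * Rmax / (1 - γ) *
      ∑' t : ℕ, γ ^ (t + 1) * ∑ p : S × A,
        dhat t p * ((1 / 2) * ∑ s', |Tstar p s' - That p s'|) := by
  have hγ' : 0 < 1 - γ := by linarith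
  have hRmax : 0 ≤ Rmax := le_trans (abs_nonneg _) (hr (Classical.arbitrary _))
  obtain ⟨Δ, hΔ⟩ : ∃ Δ : ℕ → ℝ, ∀ t, Δ t = ∑ p : S × A, |dstar t p - dhat t p| :=
    ⟨_, fun t => rfl⟩
  obtain ⟨ε, hε⟩ : ∃ ε : ℕ → ℝ, ∀ t,
      ε t = ∑ p : S × A, dhat t p * ∑ s', |Tstar p s' - That p s'| :=
    ⟨_, fun t => rfl⟩
  -- nonnegativity and total mass of the distributions
  have hdsP : ∀ t, (∀ p : S × A, 0 ≤ dstar t p) ∧ (∑ p : S × A, dstar t p = 1) := by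
    intro t
    induction t with
    | zero =>
      constructor
      · rintro ⟨s, a⟩
        rw [hds0]
        split
        · exact hπ0 s a
        · exact le_refl 0
      · rw [Fintype.sum_prod_type]
        have h1 : ∀ s : S, ∑ a, dstar 0 (s, a) = if s = s₀ then 1 else 0 := by
          intro s
          by_cases h : s = s₀ <;> simp [hds0, h, hπ1]
        simp [h1]
    | succ t ih =>
      constructor
      · rintro ⟨s', a'⟩
        rw [hdss]
        exact mul_nonneg (hπ0 s' a') (Finset.sum_nonneg fun p _ =>
          mul_nonneg (ih.1 p) (hTs0 p s'))
      · rw [Fintype.sum_prod_type]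
        have h1 : ∀ s' : S, ∑ a', dstar (t + 1) (s', a') =
            ∑ p : S × A, dstar t p * Tstar p s' := by
          intro s'
          simp only [hdss]
          rw [← Finset.sum_mul, hπ1, one_mul]
        rw [Finset.sum_congr rfl fun s' _ => h1 s', Finset.sum_comm]
        simp only [← Finset.mul_sum, hTs1, mul_one]
        exact ih.2
  have hdhP : ∀ t, (∀ p : S × A, 0 ≤ dhat t p) ∧ (∑ p : S × A, dhat t p = 1) := by
    intro t
    induction t with
    | zero =>
      constructor
      · rintro ⟨s, a⟩
        rw [hdh0]
        split
        · exact hπ0 s a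
        · exact le_refl 0
      · rw [Fintype.sum_prod_type]
        have h1 : ∀ s : S, ∑ a, dhat 0 (s, a) = if s = s₀ then 1 else 0 := by
          intro s
          by_cases h : s = s₀ <;> simp [hdh0, h, hπ1]
        simp [h1]
    | succ t ih =>
      constructor
      · rintro ⟨s', a'⟩
        rw [hdhs]
        exact mul_nonneg (hπ0 s' a') (Finset.sum_nonneg fun p _ =>
          mul_nonneg (ih.1 p) (hTh0 p s'))
      · rw [Fintype.sum_prod_type]
        have h1 : ∀ s' : S, ∑ a', dhat (t + 1) (s', a') =
            ∑ p : S × A, dhat t p * That p s' := by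
          intro s'
          simp only [hdhs]
          rw [← Finset.sum_mul, hπ1, one_mul]
        rw [Finset.sum_congr rfl fun s' _ => h1 s', Finset.sum_comm]
        simp only [← Finset.mul_sum, hTh1, mul_one]
        exact ih.2
  -- basic bounds
  have hTV2 : ∀ p : S × A, ∑ s', |Tstar p s' - That p s'| ≤ 2 := by
    intro p
    calc ∑ s', |Tstar p s' - That p s'| ≤ ∑ s', (Tstar p s' + That p s') :=
          Finset.sum_le_sum fun s' _ => by
            have := abs_sub (Tstar p s') (That p s')
            rw [abs_of_nonneg (hTs0 p s'), abs_of_nonneg (hTh0 p s')] at this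
            exact this
      _ = 2 := by rw [Finset.sum_add_distrib, hTs1, hTh1]; norm_num
  have hTV0 : ∀ p : S × A, 0 ≤ ∑ s', |Tstar p s' - That p s'| :=
    fun p => Finset.sum_nonneg fun s' _ => abs_nonneg _
  have hε0 : ∀ t, 0 ≤ ε t := fun t => by
    rw [hε]
    exact Finset.sum_nonneg fun p _ => mul_nonneg ((hdhP t).1 p) (hTV0 p)
  have hε2 : ∀ t, ε t ≤ 2 := fun t => by
    rw [hε]
    calc ∑ p : S × A, dhat t p * ∑ s', |Tstar p s' - That p s'|
        ≤ ∑ p : S × A, dhat t p * 2 :=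
          Finset.sum_le_sum fun p _ => mul_le_mul_of_nonneg_left (hTV2 p) ((hdhP t).1 p)
      _ = 2 := by rw [← Finset.sum_mul, (hdhP t).2, one_mul]
  have hΔ0 : ∀ t, 0 ≤ Δ t := fun t => by
    rw [hΔ]; exact Finset.sum_nonneg fun p _ => abs_nonneg _
  have hΔ2 : ∀ t, Δ t ≤ 2 := fun t => by
    rw [hΔ]
    calc ∑ p : S × A, |dstar t p - dhat t p|
        ≤ ∑ p : S × A, (dstar t p + dhat t p) :=
          Finset.sum_le_sum fun p _ => by
            have := abs_sub (dstar t p) (dhat t p)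
            rw [abs_of_nonneg ((hdsP t).1 p), abs_of_nonneg ((hdhP t).1 p)] at this
            exact this
      _ = 2 := by rw [Finset.sum_add_distrib, (hdsP t).2, (hdhP t).2]; norm_num
  have hΔzero : Δ 0 = 0 := by
    rw [hΔ]
    apply Finset.sum_eq_zero
    rintro ⟨s, a⟩ _
    rw [hds0, hdh0, sub_self, abs_zero]
  -- recursion step : Δ (t+1) ≤ Δ t + ε t
  have hstep : ∀ t, Δ (t + 1) ≤ Δ t + ε t := by
    intro t
    rw [hΔ, hΔ, hε, Fintype.sum_prod_type]
    have h1 : ∀ s' : S, ∑ a', |dstar (t + 1) (s', a') - dhat (t + 1) (s', a')| =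
        |(∑ p : S × A, dstar t p * Tstar p s') - ∑ p : S × A, dhat t p * That p s'| := by
      intro s'
      have : ∀ a', |dstar (t + 1) (s', a') - dhat (t + 1) (s', a')| =
          π s' a' * |(∑ p : S × A, dstar t p * Tstar p s') -
            ∑ p : S × A, dhat t p * That p s'| := by
        intro a'
        rw [hdss, hdhs, ← mul_sub, abs_mul, abs_of_nonneg (hπ0 s' a')]
      rw [Finset.sum_congr rfl fun a' _ => this a', ← Finset.sum_mul, hπ1, one_mul]
    rw [Finset.sum_congr rfl fun s' _ => h1 s']
    calc ∑ s', |(∑ p : S × A, dstar t p * Tstar p s') - ∑ p : S × A, dhat t p * That p s'|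
        ≤ ∑ s', ∑ p : S × A,
            (|dstar t p - dhat t p| * Tstar p s' + dhat t p * |Tstar p s' - That p s'|) := by
          apply Finset.sum_le_sum
          intro s' _
          calc |(∑ p : S × A, dstar t p * Tstar p s') - ∑ p : S × A, dhat t p * That p s'|
              = |∑ p : S × A, ((dstar t p - dhat t p) * Tstar p s'
                  + dhat t p * (Tstar p s' - That p s'))| := by
                congr 1
                rw [← Finset.sum_sub_distrib]
                apply Finset.sum_congr rfl
                intro p _
                ring
            _ ≤ ∑ p : S × A, |(dstar t p - dhat t p) * Tstar p s'
                  + dhat t p * (Tstar p s' - That p s')| := Finset.abs_sum_le_sum_abs _ _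
            _ ≤ ∑ p : S × A,
                (|dstar t p - dhat t p| * Tstar p s' + dhat t p * |Tstar p s' - That p s'|) := by
                apply Finset.sum_le_sum
                intro p _
                calc |(dstar t p - dhat t p) * Tstar p s'
                      + dhat t p * (Tstar p s' - That p s')|
                    ≤ |(dstar t p - dhat t p) * Tstar p s'|
                      + |dhat t p * (Tstar p s' - That p s')| := abs_add_le _ _
                  _ = |dstar t p - dhat t p| * Tstar p s'
                      + dhat t p * |Tstar p s' - That p s'| := by
                      rw [abs_mul, abs_mul, abs_of_nonneg (hTs0 p s'),
                        abs_of_nonneg ((hdhP t).1 p)]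
      _ = (∑ p : S × A, |dstar t p - dhat t p|)
            + ∑ p : S × A, dhat t p * ∑ s', |Tstar p s' - That p s'| := by
          rw [Finset.sum_comm, ← Finset.sum_add_distrib]
          apply Finset.sum_congr rfl
          intro p _
          rw [Finset.sum_add_distrib, ← Finset.mul_sum, ← Finset.mul_sum, hTs1, mul_one]
  -- summability
  have hgeo : Summable fun t : ℕ => γ ^ t := summable_geometric_of_lt_one hγ0 hγ1
  have hgeo2 : Summable fun t : ℕ => 2 * γ ^ t := hgeo.mul_left 2
  have hSsum : Summable fun t : ℕ => γ ^ t * Δ t := by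
    apply Summable.of_nonneg_of_le
      (fun t => mul_nonneg (pow_nonneg hγ0 t) (hΔ0 t))
      (fun t => ?_) hgeo2
    rw [mul_comm 2 (γ ^ t)]
    exact mul_le_mul_of_nonneg_left (hΔ2 t) (pow_nonneg hγ0 t)
  have hEsum : Summable fun t : ℕ => γ ^ t * ε t := by
    apply Summable.of_nonneg_of_le
      (fun t => mul_nonneg (pow_nonneg hγ0 t) (hε0 t))
      (fun t => ?_) hgeo2
    rw [mul_comm 2 (γ ^ t)]
    exact mul_le_mul_of_nonneg_left (hε2 t) (pow_nonneg hγ0 t)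
  -- the key inequality : S ≤ γ S + γ E
  have hSle : (∑' t : ℕ, γ ^ t * Δ t) ≤
      γ * (∑' t : ℕ, γ ^ t * Δ t) + γ * ∑' t : ℕ, γ ^ t * ε t := by
    have h1 : (∑' t : ℕ, γ ^ t * Δ t) = ∑' t : ℕ, γ ^ (t + 1) * Δ (t + 1) := by
      rw [Summable.tsum_eq_zero_add hSsum, hΔzero, pow_zero, mul_zero, zero_add]
    have h2 : (∑' t : ℕ, γ ^ (t + 1) * Δ (t + 1)) ≤
        ∑' t : ℕ, (γ * (γ ^ t * Δ t) + γ * (γ ^ t * ε t)) := by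
      apply Summable.tsum_le_tsum _ (hSsum.comp_injective Nat.succ_injective |>.congr ?_)
        ((hSsum.mul_left γ).add (hEsum.mul_left γ))
      · intro t
        have := hstep t
        have hp : 0 ≤ γ ^ (t + 1) := pow_nonneg hγ0 _
        calc γ ^ (t + 1) * Δ (t + 1) ≤ γ ^ (t + 1) * (Δ t + ε t) :=
              mul_le_mul_of_nonneg_left this hp
          _ = γ * (γ ^ t * Δ t) + γ * (γ ^ t * ε t) := by ring
      · intro t; rfl
    calc (∑' t : ℕ, γ ^ t * Δ t) = ∑' t : ℕ, γ ^ (t + 1) * Δ (t + 1) := h1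
      _ ≤ ∑' t : ℕ, (γ * (γ ^ t * Δ t) + γ * (γ ^ t * ε t)) := h2
      _ = γ * (∑' t : ℕ, γ ^ t * Δ t) + γ * ∑' t : ℕ, γ ^ t * ε t := by
          rw [Summable.tsum_add (hSsum.mul_left γ) (hEsum.mul_left γ), tsum_mul_left, tsum_mul_left]
  have hSbound : (∑' t : ℕ, γ ^ t * Δ t) ≤ γ * (∑' t : ℕ, γ ^ t * ε t) / (1 - γ) := by
    rw [le_div_iff₀ hγ']
    nlinarith [hSle]
  -- bound on |Jstar - Jhat|
  have hrow : ∀ (d : ℕ → S × A → ℝ) t, (∀ p : S × A, 0 ≤ d t p) →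
      (∑ p : S × A, d t p = 1) → |∑ p : S × A, d t p * r p| ≤ Rmax := by
    intro d t h0 h1
    calc |∑ p : S × A, d t p * r p| ≤ ∑ p : S × A, |d t p * r p| :=
          Finset.abs_sum_le_sum_abs _ _
      _ ≤ ∑ p : S × A, d t p * Rmax := by
          apply Finset.sum_le_sum
          intro p _
          rw [abs_mul, abs_of_nonneg (h0 p)]
          exact mul_le_mul_of_nonneg_left (hr p) (h0 p)
      _ = Rmax := by rw [← Finset.sum_mul, h1, one_mul]
  have hJsSum : Summable fun t : ℕ => γ ^ t * ∑ p : S × A, dstar t p * r p := by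
    apply Summable.of_norm_bounded (hgeo.mul_right Rmax)
    intro t
    rw [Real.norm_eq_abs, abs_mul, abs_pow, abs_of_nonneg hγ0]
    exact mul_le_mul_of_nonneg_left (hrow dstar t (hdsP t).1 (hdsP t).2) (pow_nonneg hγ0 t)
  have hJhSum : Summable fun t : ℕ => γ ^ t * ∑ p : S × A, dhat t p * r p := by
    apply Summable.of_norm_bounded (hgeo.mul_right Rmax)
    intro t
    rw [Real.norm_eq_abs, abs_mul, abs_pow, abs_of_nonneg hγ0]
    exact mul_le_mul_of_nonneg_left (hrow dhat t (hdhP t).1 (hdhP t).2) (pow_nonneg hγ0 t)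
  have hJdiff : Jstar - Jhat = ∑' t : ℕ,
      γ ^ t * ((∑ p : S × A, dstar t p * r p) - ∑ p : S × A, dhat t p * r p) := by
    rw [hJs, hJh, ← Summable.tsum_sub hJsSum hJhSum]
    apply tsum_congr
    intro t
    ring
  have hbound : ∀ t : ℕ,
      ‖γ ^ t * ((∑ p : S × A, dstar t p * r p) - ∑ p : S × A, dhat t p * r p)‖
        ≤ Rmax * (γ ^ t * Δ t) := by
    intro t
    rw [Real.norm_eq_abs, abs_mul, abs_pow, abs_of_nonneg hγ0]
    have hinner : |(∑ p : S × A, dstar t p * r p) - ∑ p : S × A, dhat t p * r p|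
        ≤ Rmax * Δ t := by
      calc |(∑ p : S × A, dstar t p * r p) - ∑ p : S × A, dhat t p * r p|
          = |∑ p : S × A, (dstar t p - dhat t p) * r p| := by
            rw [← Finset.sum_sub_distrib]
            congr 1
            apply Finset.sum_congr rfl
            intro p _
            ring
        _ ≤ ∑ p : S × A, |(dstar t p - dhat t p) * r p| := Finset.abs_sum_le_sum_abs _ _
        _ ≤ ∑ p : S × A, |dstar t p - dhat t p| * Rmax := by
            apply Finset.sum_le_sum
            intro p _
            rw [abs_mul]
            exact mul_le_mul_of_nonneg_left (hr p) (abs_nonneg _)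
        _ = Rmax * Δ t := by rw [hΔ, ← Finset.sum_mul, mul_comm]
    calc γ ^ t * |(∑ p : S × A, dstar t p * r p) - ∑ p : S × A, dhat t p * r p|
        ≤ γ ^ t * (Rmax * Δ t) := mul_le_mul_of_nonneg_left hinner (pow_nonneg hγ0 t)
      _ = Rmax * (γ ^ t * Δ t) := by ring
  have hJabs : |Jstar - Jhat| ≤ Rmax * ∑' t : ℕ, γ ^ t * Δ t := by
    rw [hJdiff]
    have hsum' : Summable fun t : ℕ =>
        ‖γ ^ t * ((∑ p : S × A, dstar t p * r p) - ∑ p : S × A, dhat t p * r p)‖ :=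
      Summable.of_nonneg_of_le (fun t => norm_nonneg _) hbound (hSsum.mul_left Rmax)
    calc |∑' t : ℕ, γ ^ t * ((∑ p : S × A, dstar t p * r p) - ∑ p : S × A, dhat t p * r p)|
        ≤ ∑' t : ℕ, ‖γ ^ t * ((∑ p : S × A, dstar t p * r p)
            - ∑ p : S × A, dhat t p * r p)‖ := by
          rw [← Real.norm_eq_abs]
          exact norm_tsum_le_tsum_norm hsum'
      _ ≤ ∑' t : ℕ, Rmax * (γ ^ t * Δ t) :=
          Summable.tsum_le_tsum hbound hsum' (hSsum.mul_left Rmax)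
      _ = Rmax * ∑' t : ℕ, γ ^ t * Δ t := tsum_mul_left
  -- identify the RHS
  have hRHS : (∑' t : ℕ, γ ^ (t + 1) * ∑ p : S × A,
      dhat t p * ((1 / 2) * ∑ s', |Tstar p s' - That p s'|)) =
      (γ / 2) * ∑' t : ℕ, γ ^ t * ε t := by
    rw [← tsum_mul_left]
    apply tsum_congr
    intro t
    have : (∑ p : S × A, dhat t p * ((1 / 2) * ∑ s', |Tstar p s' - That p s'|)) =
        (1 / 2) * ε t := by
      rw [hε, Finset.mul_sum]
      apply Finset.sum_congr rfl
      intro p _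
      ring
    rw [this]
    ring
  rw [hRHS]
  calc |Jstar - Jhat| ≤ Rmax * ∑' t : ℕ, γ ^ t * Δ t := hJabs
    _ ≤ Rmax * (γ * (∑' t : ℕ, γ ^ t * ε t) / (1 - γ)) :=
        mul_le_mul_of_nonneg_left hSbound hRmax
    _ = 2 * Rmax / (1 - γ) * ((γ / 2) * ∑' t : ℕ, γ ^ t * ε t) := by
        field_simp
end
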